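/- For unit vectors y, z ∈ S¹, the normalized arc-length measure of Q(y) ∩ Q(z) equals 1/2 − (1/π)·arccos|y·z|, where Q(x) = {w ∈ S¹ : |x·w| > √2/2}. -/

import Mathlib

open RealInnerProductSpace MeasureTheory

/-- The normalized arc-length (uniform) probability measure on the unit circle
`S¹ ⊂ ℝ²`, as the pushforward of normalized Lebesgue measure on `[0, 2π)` under
`θ ↦ (cos θ, sin θ)`. -/
noncomputable def circleUnif : Measure (EuclideanSpace ℝ (Fin 2)) :=
  Measure.map (fun θ : ℝ => (!₂[Real.cos θ, Real.sin θ] : EuclideanSpace ℝ (Fin 2)))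
    (ENNReal.ofReal (2 * Real.pi)⁻¹ • volume.restrict (Set.Ico 0 (2 * Real.pi)))

/-- The antipodal quadrants in the direction `x`. -/
def quad (x : EuclideanSpace ℝ (Fin 2)) : Set (EuclideanSpace ℝ (Fin 2)) :=
  {w | |⟪x, w⟫| > Real.sqrt 2 / 2}

/-! Write `y`, `z` as the points of angle `α`, `β` on the circle. The point of angle `θ` lies
in `Q(y) ∩ Q(z)` iff both `θ - α` and `θ - β` are within `π / 4` of `πℤ`. This set is
`2π`-periodic, so its measure over a period may be computed on the window
`(α - π/4, α + 7π/4]`. Reducing `β - α` modulo `π` to some `e` with `|e| ≤ π / 2`, the set meets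
that window in two disjoint overlaps of intervals of length `π / 2` whose centres are `|e|`
apart, of total length `π - 2|e|`, and `|e| = arccos |⟪y, z⟫|`. -/

open Real Set Metric

lemma exists_int_abs_sub_mul_le {T : ℝ} (hT : 0 < T) (x : ℝ) :
    ∃ k : ℤ, |x - k * T| ≤ T / 2 := by
  refine ⟨round (x / T), ?_⟩
  have h : x - round (x / T) * T = (x / T - round (x / T)) * T := by field_simp
  rw [h, abs_mul, abs_of_pos hT]
  nlinarith [abs_sub_round (x / T)]

lemma Function.Periodic.volume_preimage_inter_Ioc_eq {X : Type*} {g : ℝ → X} {T : ℝ}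
    (hg : Function.Periodic g T) (hT : 0 < T) {s : Set X} (hs : MeasurableSet (g ⁻¹' s))
    (a b : ℝ) :
    volume (g ⁻¹' s ∩ Ioc a (a + T)) = volume (g ⁻¹' s ∩ Ioc b (b + T)) :=
  (isAddFundamentalDomain_Ioc hT a).measure_set_eq (isAddFundamentalDomain_Ioc hT b) hs
    fun ⟨_, n, rfl⟩ ↦ by
      ext x
      simp [add_comm _ x, hg.int_mul n x]

lemma Real.volume_ball_inter_ball (a b r : ℝ) :
    volume (ball a r ∩ ball b r) = ENNReal.ofReal (2 * r - |a - b|) := by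
  rw [Real.ball_eq_Ioo, Real.ball_eq_Ioo, Ioo_inter_Ioo, Real.volume_Ioo, min_add_add_right,
    max_sub_sub_right, ← max_sub_min_eq_abs']
  congr 1
  ring

lemma abs_cos_sub_int_mul_pi (x : ℝ) (k : ℤ) : |cos (x - k * π)| = |cos x| := by
  simp [cos_sub_int_mul_pi, abs_mul]

lemma abs_cos_eq_cos_abs {x : ℝ} (hx : |x| ≤ π / 2) : |cos x| = cos |x| := by
  rw [cos_abs, abs_of_nonneg (cos_nonneg_of_mem_Icc (abs_le.1 hx))]

lemma arccos_abs_cos {x : ℝ} (hx : |x| ≤ π / 2) : arccos |cos x| = |x| := by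
  rw [abs_cos_eq_cos_abs hx, arccos_cos (abs_nonneg x) (by linarith [pi_pos])]

lemma sqrt_two_div_two_lt_abs_cos_iff_of_abs_le {x : ℝ} (hx : |x| ≤ π / 2) :
    √2 / 2 < |cos x| ↔ |x| < π / 4 := by
  rw [abs_cos_eq_cos_abs hx, ← cos_pi_div_four]
  exact Real.strictAntiOn_cos.lt_iff_gt ⟨by positivity, by linarith [pi_pos]⟩
    ⟨abs_nonneg x, by linarith [pi_pos]⟩

lemma sqrt_two_div_two_lt_abs_cos_iff {x : ℝ} :
    √2 / 2 < |cos x| ↔ ∃ k : ℤ, x ∈ ball (k * π) (π / 4) := by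
  simp only [mem_ball, Real.dist_eq]
  constructor
  · obtain ⟨k, hk⟩ := exists_int_abs_sub_mul_le pi_pos x
    rw [← abs_cos_sub_int_mul_pi x k, sqrt_two_div_two_lt_abs_cos_iff_of_abs_le hk]
    exact fun h ↦ ⟨k, h⟩
  · rintro ⟨k, hk⟩
    rwa [← abs_cos_sub_int_mul_pi x k,
      sqrt_two_div_two_lt_abs_cos_iff_of_abs_le (by linarith [pi_pos])]

lemma setOf_abs_cos_inter_Ioc_eq {e : ℝ} (he : |e| ≤ π / 2) :
    {s | √2 / 2 < |cos s| ∧ √2 / 2 < |cos (s - e)|} ∩ Ioc (-(π / 4)) (7 * π / 4) =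
      (ball 0 (π / 4) ∩ ball e (π / 4)) ∪ (ball π (π / 4) ∩ ball (π + e) (π / 4)) := by
  have hπ := pi_pos
  obtain ⟨he₁, he₂⟩ := abs_le.1 he
  ext s
  simp only [mem_inter_iff, mem_ofPred_eq, sqrt_two_div_two_lt_abs_cos_iff, mem_ball,
    Real.dist_eq, mem_Ioc, mem_union, abs_lt]
  constructor
  · rintro ⟨⟨⟨k, hk₁, hk₂⟩, ⟨l, hl₁, hl₂⟩⟩, hs₁, hs₂⟩
    -- `s` and `s - e` are near the same multiple of `π`, and the window leaves only `0` and `π`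
    obtain rfl : l = k := by
      have h₁ : (-1 : ℝ) < l - k := by nlinarith
      have h₂ : (l : ℝ) - k < 1 := by nlinarith
      norm_cast at h₁ h₂
      omega
    obtain rfl | rfl : l = 0 ∨ l = 1 := by
      have h₁ : (-1 : ℝ) < l := by nlinarith
      have h₂ : (l : ℝ) < 2 := by nlinarith
      norm_cast at h₁ h₂
      omega
    · push_cast at *
      left; constructor <;> constructor <;> linarith
    · push_cast at *
      right; constructor <;> constructor <;> linarith
  · rintro (⟨⟨h₁, h₂⟩, h₃, h₄⟩ | ⟨⟨h₁, h₂⟩, h₃, h₄⟩)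
    · refine ⟨⟨⟨0, ?_, ?_⟩, ⟨0, ?_, ?_⟩⟩, ?_, ?_⟩ <;> push_cast <;> linarith
    · refine ⟨⟨⟨1, ?_, ?_⟩, ⟨1, ?_, ?_⟩⟩, ?_, ?_⟩ <;> push_cast <;> linarith

lemma volume_setOf_abs_cos_inter_Ioc (e : ℝ) :
    volume ({s | √2 / 2 < |cos s| ∧ √2 / 2 < |cos (s - e)|} ∩ Ioc (-(π / 4)) (7 * π / 4)) =
      ENNReal.ofReal (π - 2 * arccos |cos e|) := by
  obtain ⟨k, hk⟩ := exists_int_abs_sub_mul_le pi_pos e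
  set e' := e - k * π
  have hset : {s | √2 / 2 < |cos s| ∧ √2 / 2 < |cos (s - e)|} =
      {s | √2 / 2 < |cos s| ∧ √2 / 2 < |cos (s - e')|} := by
    ext s
    rw [mem_ofPred_eq, mem_ofPred_eq, ← abs_cos_sub_int_mul_pi (s - e') k, sub_sub,
      sub_add_cancel]
  have hdist : π / 4 + π / 4 ≤ dist (0 : ℝ) π := by
    rw [dist_comm, Real.dist_0_eq_abs, abs_of_pos pi_pos]
    linarith [pi_pos]
  have hdisj : Disjoint (ball 0 (π / 4) ∩ ball e' (π / 4))
      (ball π (π / 4) ∩ ball (π + e') (π / 4)) :=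
    (ball_disjoint_ball hdist).mono inter_subset_left inter_subset_left
  have hhalf : 0 ≤ 2 * (π / 4) - |e'| := by linarith [pi_pos]
  rw [hset, setOf_abs_cos_inter_Ioc_eq hk,
    measure_union hdisj (measurableSet_ball.inter measurableSet_ball),
    Real.volume_ball_inter_ball, Real.volume_ball_inter_ball, zero_sub, abs_neg,
    sub_add_cancel_left, abs_neg, ← ENNReal.ofReal_add hhalf hhalf,
    ← abs_cos_sub_int_mul_pi e k, arccos_abs_cos hk]
  ring_nf

noncomputable def circlePoint (θ : ℝ) : EuclideanSpace ℝ (Fin 2) := !₂[cos θ, sin θ]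

lemma circlePoint_periodic : Function.Periodic circlePoint (2 * π) := fun θ ↦ by
  simp [circlePoint]

lemma continuous_circlePoint : Continuous circlePoint :=
  (PiLp.continuous_toLp 2 _).comp <| continuous_pi fun i ↦ by
    fin_cases i
    exacts [continuous_cos, continuous_sin]

lemma inner_circlePoint (a b : ℝ) : ⟪circlePoint a, circlePoint b⟫ = cos (b - a) := by
  simp [circlePoint, PiLp.inner_apply, Fin.sum_univ_two, cos_sub]

lemma EuclideanSpace.exists_eq_circlePoint {y : EuclideanSpace ℝ (Fin 2)} (hy : ‖y‖ = 1) :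
    ∃ α, y = circlePoint α := by
  have hsq : y 0 ^ 2 + y 1 ^ 2 = 1 := by
    simpa [EuclideanSpace.norm_eq, Fin.sum_univ_two, Real.sqrt_eq_one] using hy
  obtain ⟨α, hα⟩ := (Complex.norm_eq_one_iff ⟨y 0, y 1⟩).1 <| by
    rw [Complex.norm_def, Complex.normSq_mk, Real.sqrt_eq_one]
    linarith
  refine ⟨α, ?_⟩
  ext i
  fin_cases i
  · simpa [circlePoint, Complex.exp_ofReal_mul_I_re] using congrArg Complex.re hα.symm
  · simpa [circlePoint, Complex.exp_ofReal_mul_I_im] using congrArg Complex.im hα.symm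

lemma isOpen_quad (x : EuclideanSpace ℝ (Fin 2)) : IsOpen (quad x) :=
  isOpen_lt continuous_const (continuous_const.inner continuous_id).abs

lemma circleUnif_apply {s : Set (EuclideanSpace ℝ (Fin 2))} (hs : MeasurableSet s) :
    circleUnif s = ENNReal.ofReal (2 * π)⁻¹ * volume (circlePoint ⁻¹' s ∩ Ico 0 (2 * π)) := by
  change Measure.map circlePoint _ s = _
  rw [Measure.map_apply continuous_circlePoint.measurable hs, Measure.smul_apply,
    Measure.restrict_apply (continuous_circlePoint.measurable hs), smul_eq_mul]

lemma volume_circlePoint_preimage_quad_inter (α β a b : ℝ) :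
    volume (circlePoint ⁻¹' (quad (circlePoint α) ∩ quad (circlePoint β)) ∩ Ioc (a + α) (b + α)) =
      volume ({s | √2 / 2 < |cos s| ∧ √2 / 2 < |cos (s - (β - α))|} ∩ Ioc a b) := by
  rw [← measure_preimage_add_right volume α]
  congr 1
  ext s
  simp [quad, inner_circlePoint, sub_sub_eq_add_sub, add_sub_assoc]

theorem stmt_11 (y z : EuclideanSpace ℝ (Fin 2)) (hy : ‖y‖ = 1) (hz : ‖z‖ = 1) :
    (circleUnif (quad y ∩ quad z)).toReal = 1 / 2 - (1 / Real.pi) * Real.arccos |⟪y, z⟫| := by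
  obtain ⟨α, rfl⟩ := EuclideanSpace.exists_eq_circlePoint hy
  obtain ⟨β, rfl⟩ := EuclideanSpace.exists_eq_circlePoint hz
  have hS : MeasurableSet (quad (circlePoint α) ∩ quad (circlePoint β)) :=
    ((isOpen_quad _).inter (isOpen_quad _)).measurableSet
  have hvol : volume (circlePoint ⁻¹' (quad (circlePoint α) ∩ quad (circlePoint β)) ∩
      Ico 0 (2 * π)) = ENNReal.ofReal (π - 2 * arccos |cos (β - α)|) := by
    rw [measure_congr ((ae_eq_refl _).inter Ico_ae_eq_Ioc), ← zero_add (2 * π),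
      circlePoint_periodic.volume_preimage_inter_Ioc_eq two_pi_pos
        (continuous_circlePoint.measurable hS) 0 (-(π / 4) + α),
      show -(π / 4) + α + 2 * π = 7 * π / 4 + α by ring,
      volume_circlePoint_preimage_quad_inter, volume_setOf_abs_cos_inter_Ioc]
  have harccos : arccos |cos (β - α)| ≤ π / 2 := arccos_le_pi_div_two.2 (abs_nonneg _)
  rw [circleUnif_apply hS, hvol, inner_circlePoint, ENNReal.toReal_mul,
    ENNReal.toReal_ofReal (by positivity), ENNReal.toReal_ofReal (by linarith)]
  field_simp
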